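/- Let J be the involution on L²([0,1]^m) defined by (Jf)(x₁,…,x_m) = f(1−x_m,…,1−x₁). Suppose the kernel χ : [0,1]^{m+1} → ℝ satisfies χ(x₁,…,x_{m+1}) = χ(1−x_{m+1},…,1−x₁). Then the adjoint of the operator (Tf)(x) = ∫₀¹ χ(t,x₁,…,x_m) f(t,x₁,…,x_{m−1}) dt satisfies T* = J T J. Moreover, if Tφ = λφ then T*(Jφ) = λ·(Jφ), and ⟨𝟙, conj(Jφ)⟩ = ⟨φ, 𝟙⟩. -/

import Mathlib

open MeasureTheory

noncomputable section

/-- The unit cube [0,1]^m. -/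
def unitCube (m : ℕ) : Set (Fin m → ℝ) := Set.univ.pi fun _ => Set.Icc (0 : ℝ) 1

/-- Lebesgue measure restricted to the unit cube. -/
def cubeMeasure (m : ℕ) : Measure (Fin m → ℝ) := volume.restrict (unitCube m)

/-- The vector (t, x₁, …, x_{m-1}) obtained by shifting x and prepending t. -/
def shiftIn {m : ℕ} (t : ℝ) (x : Fin m → ℝ) : Fin m → ℝ :=
  fun i => if i.val = 0 then t else x ⟨i.val - 1, by have := i.isLt; omega⟩

/-- The integral operator (Tf)(x₁,…,x_m) = ∫₀¹ χ(t,x₁,…,x_m) f(t,x₁,…,x_{m-1}) dt. -/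
def TOp {m : ℕ} (χ : (Fin (m + 1) → ℝ) → ℝ) (f : (Fin m → ℝ) → ℝ) :
    (Fin m → ℝ) → ℝ :=
  fun x => ∫ t in Set.Icc (0 : ℝ) 1, χ (Fin.cons t x) * f (shiftIn t x)

/-- The involution (Jf)(x₁,…,x_m) = f(1−x_m,…,1−x₁). -/
def Jop {m : ℕ} (f : (Fin m → ℝ) → ℝ) : (Fin m → ℝ) → ℝ :=
  fun x => f fun i => 1 - x i.rev


/-!
`J` is composition with the reflection `σ x = (1 - x_m, …, 1 - x_1)`, which preserves Lebesgue
measure on the cube; so `J² = 1` and `∫ Jφ = ∫ φ`, and the eigenvalue relation for `JTJ` is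
immediate. For the adjoint identity, both `⟨Tf, g⟩` and `⟨f, JTJg⟩` equal the integral over
`[0,1]^{m+1}` of `χ(y) f(y_1,…,y_m) g(y_2,…,y_{m+1})`: the first by integrating out `y_1`, the second
by integrating out `y_{m+1}` after the substitution `t ↦ 1 - t`, the symmetry of `χ` turning
`χ(t, σx)` into `χ(x, 1 - t)`. Fubini applies since `χ` is bounded and both factors `f`, `g` of the
integrand are `L²` on the cube.
-/

open Set

section PiFinSuccAbove

variable {α : Type*} [MeasurableSpace α] (μ : Measure α) {n : ℕ}

theorem measurePreserving_removeNth [IsProbabilityMeasure μ] (i : Fin (n + 1)) :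
    MeasurePreserving (Fin.removeNth i : (Fin (n + 1) → α) → Fin n → α)
      (Measure.pi fun _ => μ) (Measure.pi fun _ => μ) :=
  measurePreserving_snd.comp (measurePreserving_piFinSuccAbove (fun _ => μ) i)

theorem integral_integral_insertNth [SigmaFinite μ] {E : Type*} [NormedAddCommGroup E]
    [NormedSpace ℝ E] (i : Fin (n + 1)) {F : (Fin (n + 1) → α) → E}
    (hF : Integrable F (Measure.pi fun _ => μ)) :
    ∫ x, ∫ t, F (i.insertNth t x) ∂μ ∂(Measure.pi fun _ => μ) =
      ∫ y, F y ∂(Measure.pi fun _ => μ) := by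
  have hmp := (measurePreserving_piFinSuccAbove (fun _ => μ) i).symm
  have hint := (hmp.integrable_comp_emb (MeasurableEquiv.measurableEmbedding _)).mpr hF
  rw [← hmp.integral_comp' F]
  exact (integral_prod_symm _ hint).symm

theorem measurePreserving_init [IsProbabilityMeasure μ] :
    MeasurePreserving (Fin.init : (Fin (n + 1) → α) → Fin n → α)
      (Measure.pi fun _ => μ) (Measure.pi fun _ => μ) := by
  simpa only [← funext Fin.removeNth_last] using measurePreserving_removeNth μ (Fin.last n)

theorem measurePreserving_tail [IsProbabilityMeasure μ] :
    MeasurePreserving (Fin.tail : (Fin (n + 1) → α) → Fin n → α)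
      (Measure.pi fun _ => μ) (Measure.pi fun _ => μ) := by
  simpa only [← funext Fin.removeNth_zero] using measurePreserving_removeNth μ 0

end PiFinSuccAbove

instance : IsProbabilityMeasure (volume.restrict (Icc (0 : ℝ) 1)) :=
  ⟨by rw [Measure.restrict_apply_univ, Real.volume_Icc, sub_zero, ENNReal.ofReal_one]⟩

theorem cubeMeasure_eq_pi (m : ℕ) :
    cubeMeasure m = Measure.pi fun _ => volume.restrict (Icc (0 : ℝ) 1) := by
  rw [cubeMeasure, unitCube, volume_pi, Measure.restrict_pi_pi]

def oneSub : ℝ ≃ᵐ ℝ :=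
  MeasurableEquiv.ofInvolutive (fun t => 1 - t) (sub_sub_cancel 1)
    (measurable_const.sub measurable_id)

theorem oneSub_apply (t : ℝ) : oneSub t = 1 - t :=
  rfl

theorem measurePreserving_oneSub :
    MeasurePreserving oneSub (volume.restrict (Icc 0 1)) (volume.restrict (Icc 0 1)) := by
  have h := (Measure.measurePreserving_sub_left volume (1 : ℝ)).restrict_preimage
    (measurableSet_Icc (a := 0) (b := 1))
  rwa [preimage_const_sub_Icc, sub_zero, sub_self] at h

def cubeReflect (m : ℕ) : (Fin m → ℝ) ≃ᵐ (Fin m → ℝ) :=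
  MeasurableEquiv.arrowCongr' Fin.revPerm oneSub

theorem cubeReflect_apply {m : ℕ} (x : Fin m → ℝ) : cubeReflect m x = fun i => 1 - x i.rev :=
  rfl

@[simp]
theorem cubeReflect_cubeReflect {m : ℕ} (x : Fin m → ℝ) :
    cubeReflect m (cubeReflect m x) = x := by
  funext i
  simp [cubeReflect_apply]

theorem measurePreserving_cubeReflect (m : ℕ) :
    MeasurePreserving (cubeReflect m) (cubeMeasure m) (cubeMeasure m) := by
  rw [cubeMeasure_eq_pi]
  exact measurePreserving_arrowCongr' _ _ _ _ fun _ => measurePreserving_oneSub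

theorem cubeReflect_cons {n : ℕ} (a : ℝ) (x : Fin n → ℝ) :
    cubeReflect (n + 1) (Fin.cons a x) = Fin.snoc (cubeReflect n x) (1 - a) := by
  funext i
  simp only [cubeReflect_apply, Fin.cons_rev]
  exact congrFun (Fin.comp_snoc (1 - ·) _ a) i

theorem cubeReflect_init {n : ℕ} (y : Fin (n + 1) → ℝ) :
    cubeReflect n (Fin.init y) = Fin.tail (cubeReflect (n + 1) y) := by
  funext i
  simp [cubeReflect_apply, Fin.init, Fin.tail, Fin.rev_succ]

theorem shiftIn_eq_init_cons {m : ℕ} (t : ℝ) (x : Fin m → ℝ) :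
    shiftIn t x = Fin.init (Fin.cons t x : Fin (m + 1) → ℝ) := by
  cases m with
  | zero => exact Subsingleton.elim _ _
  | succ k =>
    funext i
    cases i using Fin.cases <;> rfl

theorem Jop_eq_comp_cubeReflect {m : ℕ} (f : (Fin m → ℝ) → ℝ) : Jop f = f ∘ cubeReflect m :=
  rfl

theorem Jop_Jop {m : ℕ} (f : (Fin m → ℝ) → ℝ) : Jop (Jop f) = f := by
  funext x
  simp [Jop_eq_comp_cubeReflect]

theorem integral_Jop {m : ℕ} (f : (Fin m → ℝ) → ℝ) :
    ∫ x in unitCube m, Jop f x = ∫ x in unitCube m, f x :=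
  (measurePreserving_cubeReflect m).integral_comp' f

section KernelOperator

variable {m : ℕ} (χ : (Fin (m + 1) → ℝ) → ℝ) (f g : (Fin m → ℝ) → ℝ)

def kernelPairing (y : Fin (m + 1) → ℝ) : ℝ :=
  χ y * (f (Fin.init y) * g (Fin.tail y))

theorem TOp_mul_eq_integral_cons (x : Fin m → ℝ) :
    TOp χ f x * g x = ∫ t in Icc 0 1, kernelPairing χ f g (Fin.cons t x) := by
  rw [TOp, ← integral_mul_const]
  simp only [kernelPairing, shiftIn_eq_init_cons, Fin.tail_cons, mul_assoc]

theorem mul_Jop_TOp_Jop_eq_integral_snoc (hsym : ∀ y, χ y = χ (cubeReflect (m + 1) y))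
    (x : Fin m → ℝ) :
    f x * Jop (TOp χ (Jop g)) x = ∫ t in Icc 0 1, kernelPairing χ f g (Fin.snoc x t) := by
  have hreflect (t : ℝ) :
      cubeReflect (m + 1) (Fin.cons t (cubeReflect m x)) = Fin.snoc x (1 - t) := by
    rw [cubeReflect_cons, cubeReflect_cubeReflect]
  rw [← measurePreserving_oneSub.integral_comp', Jop_eq_comp_cubeReflect, Function.comp_apply,
    TOp, ← integral_const_mul]
  congr 1 with t
  rw [oneSub_apply, hsym, hreflect, Jop_eq_comp_cubeReflect, Function.comp_apply,
    shiftIn_eq_init_cons, cubeReflect_init, hreflect, kernelPairing, Fin.init_snoc]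
  ring

theorem integrable_kernelPairing (hχ : AEStronglyMeasurable χ (cubeMeasure (m + 1))) {C : ℝ}
    (hC : ∀ y, ‖χ y‖ ≤ C) (hf : MemLp f 2 (cubeMeasure m)) (hg : MemLp g 2 (cubeMeasure m)) :
    Integrable (kernelPairing χ f g) (cubeMeasure (m + 1)) := by
  rw [cubeMeasure_eq_pi] at hf hg hχ ⊢
  have hfg := (hf.comp_measurePreserving (measurePreserving_init _)).integrable_mul
    (hg.comp_measurePreserving (measurePreserving_tail _))
  exact hfg.bdd_mul hχ (.of_forall hC)

theorem integral_TOp_mul_eq_integral_mul_Jop_TOp_Jop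
    (hχ : AEStronglyMeasurable χ (cubeMeasure (m + 1))) {C : ℝ} (hC : ∀ y, ‖χ y‖ ≤ C)
    (hsym : ∀ y, χ y = χ (cubeReflect (m + 1) y))
    (hf : MemLp f 2 (cubeMeasure m)) (hg : MemLp g 2 (cubeMeasure m)) :
    ∫ x in unitCube m, TOp χ f x * g x = ∫ x in unitCube m, f x * Jop (TOp χ (Jop g)) x := by
  have hF := integrable_kernelPairing χ f g hχ hC hf hg
  change ∫ x, _ ∂cubeMeasure m = ∫ x, _ ∂cubeMeasure m
  simp_rw [TOp_mul_eq_integral_cons, mul_Jop_TOp_Jop_eq_integral_snoc χ f g hsym]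
  rw [cubeMeasure_eq_pi] at hF ⊢
  have hcons := integral_integral_insertNth _ 0 hF
  have hsnoc := integral_integral_insertNth _ (Fin.last m) hF
  simp only [Fin.insertNth_zero'] at hcons
  simp only [Fin.insertNth_last'] at hsnoc
  rw [hcons, hsnoc]

end KernelOperator

theorem J_symmetry_adjoint (m : ℕ) (χ : (Fin (m + 1) → ℝ) → ℝ)
    (hχmeas : Measurable χ) (hχbdd : ∀ y, χ y ∈ Set.Icc (0 : ℝ) 1)
    (hsym : ∀ y : Fin (m + 1) → ℝ, χ y = χ fun i => 1 - y i.rev) :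
    (∀ f g : (Fin m → ℝ) → ℝ, MemLp f 2 (cubeMeasure m) → MemLp g 2 (cubeMeasure m) →
        ∫ x in unitCube m, TOp χ f x * g x =
          ∫ x in unitCube m, f x * Jop (TOp χ (Jop g)) x) ∧
    ∀ (lam : ℝ) (φ : (Fin m → ℝ) → ℝ), (∀ x, TOp χ φ x = lam * φ x) →
      (∀ x, Jop (TOp χ (Jop (Jop φ))) x = lam * Jop φ x) ∧
        ∫ x in unitCube m, Jop φ x = ∫ x in unitCube m, φ x := by
  have hχ_norm_le (y : Fin (m + 1) → ℝ) : ‖χ y‖ ≤ 1 := by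
    rw [Real.norm_of_nonneg (hχbdd y).1]
    exact (hχbdd y).2
  refine ⟨fun f g hf hg => ?_, fun lam φ heig => ⟨fun x => ?_, integral_Jop φ⟩⟩
  · exact integral_TOp_mul_eq_integral_mul_Jop_TOp_Jop χ f g hχmeas.aestronglyMeasurable
      hχ_norm_le hsym hf hg
  · rw [Jop_Jop]
    exact heig _

end
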